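/- arXiv:2210.12288 — 2 statements merged into one kernel-verified Lean document; each statement's English description precedes it below -/
import Mathlib

section
/- Let T = (V, E) be a finite rooted tree with nonnegative edge weights w, and let μ, ρ be probability vectors on V. Then for every coupling Π ∈ Γ(μ, ρ), Σ_{x,y∈V} Π(x,y) · d_T(x,y) ≥ Σ_{e∈E} w(e) · |μ(T_{v_e}) − ρ(T_{v_e})|. -/
open SimpleGraph Finset

/-- The unique path between two vertices of a tree. -/
noncomputable def treePath {V : Type*} (G : SimpleGraph V) (hG : G.IsTree) (u v : V) :
    G.Walk u v :=
  (hG.existsUnique_path u v).choose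

/-- The tree metric: the sum of the weights of the edges on the unique path. -/
noncomputable def treeDist {V : Type*} (G : SimpleGraph V) (hG : G.IsTree)
    (w : Sym2 V → ℝ) (u v : V) : ℝ :=
  (((treePath G hG u v).edges).map w).sum

/-- `μ(T_v)`: the total mass assigned by `μ` to the subtree rooted at `v`
(vertices `u` such that `v` lies on the unique path from the root `r` to `u`). -/
noncomputable def subtreeMass {V : Type*} [Fintype V] [DecidableEq V]
    (G : SimpleGraph V) (hG : G.IsTree) (r v : V) (μ : V → ℝ) : ℝ :=
  ∑ u ∈ Finset.univ.filter (fun u => v ∈ (treePath G hG r u).support), μ u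

/-- A probability vector on a finite set. -/
def IsProbVector {X : Type*} [Fintype X] (μ : X → ℝ) : Prop :=
  (∀ x, 0 ≤ μ x) ∧ ∑ x, μ x = 1

/-- A coupling of two probability vectors. -/
def IsCoupling {X : Type*} [Fintype X] (μ ρ : X → ℝ) (P : X × X → ℝ) : Prop :=
  (∀ p, 0 ≤ P p) ∧ (∀ y, ∑ x, P (x, y) = ρ y) ∧ (∀ x, ∑ y, P (x, y) = μ x)

section Aux

set_option linter.unusedSectionVars false

variable {V : Type*} [DecidableEq V] (G : SimpleGraph V) (hG : G.IsTree)

lemma treePath_isPath (u v : V) : (treePath G hG u v).IsPath :=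
  (hG.existsUnique_path u v).choose_spec.1

lemma treePath_eq {u v : V} {p : G.Walk u v} (hp : p.IsPath) : treePath G hG u v = p :=
  ((hG.existsUnique_path u v).choose_spec.2 p hp).symm

lemma concat_isPath' {u v x : V} {p : G.Walk u v} (hp : p.IsPath) (h : G.Adj v x)
    (hx : x ∉ p.support) : (p.concat h).IsPath := by
  apply SimpleGraph.Walk.IsPath.mk'
  rw [SimpleGraph.Walk.support_concat, List.nodup_append]
  refine ⟨hp.support_nodup, List.nodup_singleton x, fun a ha b hax hab => ?_⟩
  rw [List.mem_singleton] at hax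
  subst hax; subst hab; exact hx ha

lemma tree_step (r : V) {u u' : V} (h : G.Adj u u') :
    treePath G hG r u' = (treePath G hG r u).concat h ∨
    treePath G hG r u = (treePath G hG r u').concat h.symm := by
  by_cases hm : u' ∈ (treePath G hG r u).support
  · right
    have hpath := treePath_isPath G hG r u
    have hq : ((treePath G hG r u).takeUntil u' hm).IsPath := hpath.takeUntil hm
    have hqe : treePath G hG r u' = (treePath G hG r u).takeUntil u' hm := treePath_eq G hG hq
    rw [hqe]
    have hu : u ∉ ((treePath G hG r u).takeUntil u' hm).support := by
      intro hu
      have h2 : u ∈ ((treePath G hG r u).dropUntil u' hm).support.tail :=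
        SimpleGraph.Walk.end_mem_tail_support_of_ne h.ne' _
      have hnd := hpath.support_nodup
      rw [← SimpleGraph.Walk.take_spec (treePath G hG r u) hm,
        SimpleGraph.Walk.support_append, List.nodup_append] at hnd
      exact hnd.2.2 u hu u h2 rfl
    exact treePath_eq G hG (concat_isPath' G hq h.symm hu)
  · left
    exact treePath_eq G hG (concat_isPath' G (treePath_isPath G hG r u) h hm)

lemma penult_eq (r : V) {v a : V} (ha : G.Adj a v) (haS : a ∈ (treePath G hG r v).support) :
    treePath G hG r v = (treePath G hG r a).concat ha := by
  rcases tree_step G hG r ha with h2 | h2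
  · exact h2
  · exfalso
    have hp := treePath_isPath G hG r a
    rw [h2] at hp
    have hnd := hp.support_nodup
    rw [SimpleGraph.Walk.support_concat, List.nodup_append] at hnd
    exact hnd.2.2 a haS a (List.mem_singleton_self a) rfl

lemma mem_of_concat (r : V) {v a : V} (ha : G.Adj a v) (haS : a ∈ (treePath G hG r v).support)
    {u : V} (h : G.Adj u v) (hpen : treePath G hG r v = (treePath G hG r u).concat h) :
    u = a := by
  have h2 := penult_eq G hG r ha haS
  rw [hpen] at h2
  obtain ⟨hv, -⟩ := SimpleGraph.Walk.concat_inj h2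
  exact hv

lemma step_mem (r : V) {v a : V} (ha : G.Adj a v) (haS : a ∈ (treePath G hG r v).support)
    {u u' : V} (h : G.Adj u u') (hne : s(u, u') ≠ s(a, v)) :
    (v ∈ (treePath G hG r u).support ↔ v ∈ (treePath G hG r u').support) := by
  have key : ∀ x y : V, ∀ hxy : G.Adj x y,
      treePath G hG r y = (treePath G hG r x).concat hxy → s(x, y) ≠ s(a, v) →
      (v ∈ (treePath G hG r x).support ↔ v ∈ (treePath G hG r y).support) := by
    intro x y hxy hc hne2
    rw [hc, SimpleGraph.Walk.support_concat, List.mem_append,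
      List.mem_singleton]
    constructor
    · exact fun hv => Or.inl hv
    · rintro (hv | rfl)
      · exact hv
      · exact absurd (by rw [mem_of_concat G hG r ha haS hxy hc] :
          s(x, v) = s(a, v)) hne2
  rcases tree_step G hG r h with hc | hc
  · exact key u u' h hc hne
  · exact (key u' u h.symm hc (by rwa [Sym2.eq_swap])).symm

lemma walk_mem_iff (r : V) {v a : V} (ha : G.Adj a v) (haS : a ∈ (treePath G hG r v).support)
    {x y : V} (W : G.Walk x y) (he : s(a, v) ∉ W.edges) :
    (v ∈ (treePath G hG r x).support ↔ v ∈ (treePath G hG r y).support) := by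
  induction W with
  | nil => exact Iff.rfl
  | cons hadj p ih =>
    rw [SimpleGraph.Walk.edges_cons, List.mem_cons, not_or] at he
    exact (step_mem G hG r ha haS hadj (fun hh => he.1 hh.symm)).trans (ih he.2)

lemma edge_mem (r : V) {v a : V} (ha : G.Adj a v) (haS : a ∈ (treePath G hG r v).support)
    {x y : V}
    (hne : ¬(v ∈ (treePath G hG r x).support ↔ v ∈ (treePath G hG r y).support)) :
    s(a, v) ∈ (treePath G hG x y).edges := by
  by_contra he
  exact hne (walk_mem_iff G hG r ha haS _ he)

/-- indicator of the subtree rooted at `v`. -/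
noncomputable def ind (r v : V) : V → ℝ :=
  fun u => if v ∈ (treePath G hG r u).support then 1 else 0

lemma subtreeMass_eq [Fintype V] (r v : V) (μ : V → ℝ) :
    subtreeMass G hG r v μ = ∑ u, μ u * ind G hG r v u := by
  unfold subtreeMass ind
  rw [Finset.sum_filter]
  refine Finset.sum_congr rfl fun u _ => ?_
  split_ifs <;> simp

lemma ind_diff_le (r : V) {v a : V} {e : Sym2 V} (hev : e = s(a, v)) (ha : G.Adj a v)
    (haS : a ∈ (treePath G hG r v).support) (x y : V) :
    |ind G hG r v x - ind G hG r v y| ≤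
      (if e ∈ (treePath G hG x y).edges.toFinset then (1 : ℝ) else 0) := by
  subst hev
  unfold ind
  by_cases hx : v ∈ (treePath G hG r x).support <;>
    by_cases hy : v ∈ (treePath G hG r y).support
  · rw [if_pos hx, if_pos hy, sub_self, abs_zero]
    split_ifs <;> norm_num
  · rw [if_pos hx, if_neg hy,
      if_pos (List.mem_toFinset.mpr (edge_mem G hG r ha haS (fun h => hy (h.mp hx))))]
    norm_num
  · rw [if_neg hx, if_pos hy,
      if_pos (List.mem_toFinset.mpr (edge_mem G hG r ha haS (fun h => hx (h.mpr hy))))]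
    norm_num
  · rw [if_neg hx, if_neg hy, sub_self, abs_zero]
    split_ifs <;> norm_num

end Aux

theorem coupling_cost_ge_tree_closed_form {V : Type*} [Fintype V] [DecidableEq V]
    (G : SimpleGraph V) [Fintype G.edgeSet] (hG : G.IsTree) (r : V)
    (w : Sym2 V → ℝ) (hw : ∀ e ∈ G.edgeSet, 0 ≤ w e)
    (far : Sym2 V → V)
    (hfar : ∀ e ∈ G.edgeSet, ∃ a, e = s(a, far e) ∧ a ∈ (treePath G hG r (far e)).support)
    (μ ρ : V → ℝ) (hμ : IsProbVector μ) (hρ : IsProbVector ρ)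
    (P : V × V → ℝ) (hP : IsCoupling μ ρ P) :
    ∑ x, ∑ y, P (x, y) * treeDist G hG w x y ≥
      ∑ e ∈ G.edgeFinset,
        w e * |subtreeMass G hG r (far e) μ - subtreeMass G hG r (far e) ρ| := by
  classical
  obtain ⟨hPnn, hPcol, hProw⟩ := hP
  have hdist : ∀ x y : V, treeDist G hG w x y =
      ∑ e ∈ G.edgeFinset, (if e ∈ (treePath G hG x y).edges.toFinset then w e else 0) := by
    intro x y
    have hnd : (treePath G hG x y).edges.Nodup :=
      SimpleGraph.Walk.edges_nodup_of_support_nodup (treePath_isPath G hG x y).support_nodup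
    have hsub : (treePath G hG x y).edges.toFinset ⊆ G.edgeFinset := by
      intro e he
      rw [List.mem_toFinset] at he
      exact SimpleGraph.mem_edgeFinset.mpr ((treePath G hG x y).edges_subset_edgeSet he)
    rw [Finset.sum_ite_mem, Finset.inter_eq_right.mpr hsub]
    unfold treeDist
    exact (List.sum_toFinset _ hnd).symm
  rw [ge_iff_le]
  calc ∑ e ∈ G.edgeFinset,
        w e * |subtreeMass G hG r (far e) μ - subtreeMass G hG r (far e) ρ|
      ≤ ∑ e ∈ G.edgeFinset, ∑ x, ∑ y, P (x, y) *
          (if e ∈ (treePath G hG x y).edges.toFinset then w e else 0) := by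
        apply Finset.sum_le_sum
        intro e he
        have hee : e ∈ G.edgeSet := SimpleGraph.mem_edgeFinset.mp he
        obtain ⟨a, hae, haS⟩ := hfar e hee
        have ha : G.Adj a (far e) := G.mem_edgeSet.mp (hae ▸ hee)
        have hwe : 0 ≤ w e := hw e hee
        have h1 : subtreeMass G hG r (far e) μ =
            ∑ x, ∑ y, P (x, y) * ind G hG r (far e) x := by
          rw [subtreeMass_eq]
          refine Finset.sum_congr rfl fun x _ => ?_
          rw [← hProw x, Finset.sum_mul]
        have h2 : subtreeMass G hG r (far e) ρ =
            ∑ x, ∑ y, P (x, y) * ind G hG r (far e) y := by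
          rw [subtreeMass_eq, Finset.sum_comm]
          refine Finset.sum_congr rfl fun y _ => ?_
          rw [← hPcol y, Finset.sum_mul]
        have hdelta : subtreeMass G hG r (far e) μ - subtreeMass G hG r (far e) ρ =
            ∑ x, ∑ y, P (x, y) * (ind G hG r (far e) x - ind G hG r (far e) y) := by
          rw [h1, h2, ← Finset.sum_sub_distrib]
          refine Finset.sum_congr rfl fun x _ => ?_
          rw [← Finset.sum_sub_distrib]
          exact Finset.sum_congr rfl fun y _ => (mul_sub _ _ _).symm
        calc w e * |subtreeMass G hG r (far e) μ - subtreeMass G hG r (far e) ρ|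
            ≤ w e * ∑ x, ∑ y, P (x, y) *
                (if e ∈ (treePath G hG x y).edges.toFinset then (1 : ℝ) else 0) := by
              refine mul_le_mul_of_nonneg_left ?_ hwe
              rw [hdelta]
              calc |∑ x, ∑ y, P (x, y) * (ind G hG r (far e) x - ind G hG r (far e) y)|
                  ≤ ∑ x, |∑ y, P (x, y) * (ind G hG r (far e) x - ind G hG r (far e) y)| :=
                    Finset.abs_sum_le_sum_abs _ _
                _ ≤ ∑ x, ∑ y, |P (x, y) * (ind G hG r (far e) x - ind G hG r (far e) y)| :=
                    Finset.sum_le_sum fun x _ => Finset.abs_sum_le_sum_abs _ _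
                _ ≤ ∑ x, ∑ y, P (x, y) *
                      (if e ∈ (treePath G hG x y).edges.toFinset then (1 : ℝ) else 0) := by
                    refine Finset.sum_le_sum fun x _ => Finset.sum_le_sum fun y _ => ?_
                    rw [abs_mul, abs_of_nonneg (hPnn _)]
                    exact mul_le_mul_of_nonneg_left
                      (ind_diff_le G hG r hae ha haS x y) (hPnn _)
          _ = ∑ x, ∑ y, P (x, y) *
                (if e ∈ (treePath G hG x y).edges.toFinset then w e else 0) := by
              rw [Finset.mul_sum]
              refine Finset.sum_congr rfl fun x _ => ?_
              rw [Finset.mul_sum]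
              refine Finset.sum_congr rfl fun y _ => ?_
              split_ifs <;> ring
    _ = ∑ x, ∑ y, P (x, y) * treeDist G hG w x y := by
        rw [Finset.sum_comm]
        refine Finset.sum_congr rfl fun x _ => ?_
        rw [Finset.sum_comm]
        refine Finset.sum_congr rfl fun y _ => ?_
        rw [hdist x y, Finset.mul_sum]
end

section
/- Let X be a finite set and d a dissimilarity on X. Then for every ultrametric u on X, ‖d − u‖_∞ ≥ (1/2) · ‖d − sub(d)‖_∞. -/
open Finset

/-- An ultrametric on a set `X`. -/
def IsUltrametric {X : Type*} (u : X → X → ℝ) : Prop :=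
  (∀ x y, 0 ≤ u x y) ∧ (∀ x y, u x y = u y x) ∧ (∀ x y, u x y = 0 ↔ x = y) ∧
    (∀ x y z, u x z ≤ max (u x y) (u y z))

/-- A dissimilarity on a set `X`. -/
def IsDissimilarity {X : Type*} (d : X → X → ℝ) : Prop :=
  (∀ x y, d x y = d y x) ∧ (∀ x y, 0 ≤ d x y) ∧ (∀ x, d x x = 0) ∧
    (∀ x y, x ≠ y → 0 < d x y)

/-- The maximum of `d` over consecutive pairs of a list (a chain). -/
def chainMax {X : Type*} (d : X → X → ℝ) : List X → ℝ
  | a :: b :: t => max (d a b) (chainMax d (b :: t))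
  | _ => 0

/-- The subdominant ultrametric of a dissimilarity `d`:
`sub(d)(x,y)` is the infimum over all chains `x = z₀, z₁, …, z_k = y` (with `k ≥ 1`)
of the maximal consecutive dissimilarity, and `sub(d)(x,x) = 0`. -/
noncomputable def subdominant {X : Type*} [DecidableEq X] (d : X → X → ℝ) (x y : X) : ℝ :=
  if x = y then 0
  else sInf { m | ∃ L : List X, 2 ≤ L.length ∧ L.head? = some x ∧ L.getLast? = some y ∧
    m = chainMax d L }

/-- The supremum distance `‖A − B‖_∞ = max_{x,y} |A(x,y) − B(x,y)|`. -/
noncomputable def supDist {X : Type*} (A B : X → X → ℝ) : ℝ :=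
  ⨆ p : X × X, |A p.1 p.2 - B p.1 p.2|

lemma chainMax_nonneg {X : Type*} {d : X → X → ℝ} (hd : ∀ x y, 0 ≤ d x y) :
    ∀ L : List X, 0 ≤ chainMax d L := by
  intro L
  induction L with
  | nil => simp [chainMax]
  | cons a t ih =>
    cases t with
    | nil => simp [chainMax]
    | cons b t' =>
      simp only [chainMax]
      exact le_max_of_le_left (hd a b)

lemma chainMax_ultra {X : Type*} {u : X → X → ℝ}
    (htri : ∀ x y z, u x z ≤ max (u x y) (u y z)) :
    ∀ (t : List X) (a b y : X), (a :: b :: t).getLast? = some y →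
      u a y ≤ chainMax u (a :: b :: t) := by
  intro t
  induction t with
  | nil =>
    intro a b y hy
    simp only [List.getLast?, Option.some.injEq] at hy
    subst hy
    simp only [chainMax]
    exact le_max_left _ _
  | cons c t' ih =>
    intro a b y hy
    have hy' : (b :: c :: t').getLast? = some y := by
      simpa [List.getLast?_cons_cons] using hy
    have h1 := ih b c y hy'
    calc u a y ≤ max (u a b) (u b y) := htri a b y
      _ ≤ max (u a b) (chainMax u (b :: c :: t')) := max_le_max le_rfl h1
      _ = chainMax u (a :: b :: c :: t') := rfl

lemma chainMax_le_chainMax_add {X : Type*} {u d : X → X → ℝ} {ε : ℝ} (hε : 0 ≤ ε)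
    (h : ∀ x y, u x y ≤ d x y + ε) :
    ∀ L : List X, chainMax u L ≤ chainMax d L + ε := by
  intro L
  induction L with
  | nil => simpa [chainMax] using hε
  | cons a t ih =>
    cases t with
    | nil => simpa [chainMax] using hε
    | cons b t' =>
      simp only [chainMax]
      calc max (u a b) (chainMax u (b :: t'))
          ≤ max (d a b + ε) (chainMax d (b :: t') + ε) := max_le_max (h a b) ih
        _ = max (d a b) (chainMax d (b :: t')) + ε := (max_add_add_right _ _ _)

theorem supDist_ultrametric_lower_bound {X : Type*} [Fintype X] [DecidableEq X] [Nonempty X]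
    (d : X → X → ℝ) (hd : IsDissimilarity d)
    (u : X → X → ℝ) (hu : IsUltrametric u) :
    supDist d u ≥ (1 / 2) * supDist d (subdominant d) := by
  obtain ⟨hdsym, hdnn, hddiag, hdpos⟩ := hd
  obtain ⟨hunn, husym, hueq, hutri⟩ := hu
  set ε := supDist d u with hεdef
  have hbdd : BddAbove (Set.range fun p : X × X => |d p.1 p.2 - u p.1 p.2|) :=
    (Set.finite_range _).bddAbove
  have hle : ∀ x y, |d x y - u x y| ≤ ε := fun x y =>
    le_ciSup hbdd (⟨x, y⟩ : X × X)
  have hεnn : 0 ≤ ε := le_trans (abs_nonneg _) (hle Classical.ofNonempty Classical.ofNonempty)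
  -- pointwise bound
  have key : ∀ x y, |d x y - subdominant d x y| ≤ 2 * ε := by
    intro x y
    by_cases hxy : x = y
    · subst hxy
      have : subdominant d x x = 0 := by simp [subdominant]
      rw [this, hddiag, sub_zero, abs_zero]
      linarith
    · have hsetne : Set.Nonempty { m | ∃ L : List X, 2 ≤ L.length ∧ L.head? = some x ∧
          L.getLast? = some y ∧ m = chainMax d L } :=
        ⟨chainMax d [x, y], [x, y], by simp, by simp, by simp, rfl⟩
      have hbddb : BddBelow { m | ∃ L : List X, 2 ≤ L.length ∧ L.head? = some x ∧
          L.getLast? = some y ∧ m = chainMax d L } := by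
        refine ⟨0, fun m hm => ?_⟩
        obtain ⟨L, _, _, _, rfl⟩ := hm
        exact chainMax_nonneg hdnn L
      have hsub : subdominant d x y = sInf { m | ∃ L : List X, 2 ≤ L.length ∧
          L.head? = some x ∧ L.getLast? = some y ∧ m = chainMax d L } := by
        simp [subdominant, hxy]
      -- sub ≤ d x y
      have h1 : subdominant d x y ≤ d x y := by
        rw [hsub]
        have : chainMax d [x, y] = d x y := by
          simp [chainMax, max_eq_left (hdnn x y)]
        calc sInf _ ≤ chainMax d [x, y] :=
              csInf_le hbddb ⟨[x, y], by simp, by simp, by simp, rfl⟩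
          _ = d x y := this
      -- u x y ≤ sub + ε
      have h2 : u x y ≤ subdominant d x y + ε := by
        rw [hsub]
        have : u x y - ε ≤ sInf { m | ∃ L : List X, 2 ≤ L.length ∧ L.head? = some x ∧
            L.getLast? = some y ∧ m = chainMax d L } := by
          refine le_csInf hsetne ?_
          rintro m ⟨L, hL2, hhead, hlast, rfl⟩
          obtain ⟨a, b, t, rfl⟩ : ∃ a b t, L = a :: b :: t := by
            match L, hL2 with
            | a :: b :: t, _ => exact ⟨a, b, t, rfl⟩
          have hax : a = x := by simpa using hhead
          subst hax
          have hu1 : u a y ≤ chainMax u (a :: b :: t) := chainMax_ultra hutri t a b y hlast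
          have hud : ∀ p q, u p q ≤ d p q + ε := by
            intro p q
            have := hle p q
            have := abs_le.mp (hle p q)
            linarith [this.1]
          have := chainMax_le_chainMax_add hεnn hud (a :: b :: t)
          linarith
        linarith
      have h3 : d x y ≤ u x y + ε := by
        have := abs_le.mp (hle x y)
        linarith [this.2]
      have h4 : 0 ≤ d x y - subdominant d x y := by linarith
      rw [abs_of_nonneg h4]
      linarith
  have hfin : supDist d (subdominant d) ≤ 2 * ε := by
    refine ciSup_le fun p => key p.1 p.2
  linarith
end
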